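/- arXiv:1109.1919 — 2 statements merged into one kernel-verified Lean document; each statement's English description precedes it below -/
import Mathlib

section
/- Injectivity half of the main theorem: Let F : G → H be a weak equivalence of cosimplicial crossed groupoids, and let (x, g, a), (x', g', a') be descent data in G. If there is a gauge transformation F(x,g,a) → F(x',g',a') in H, then there is a gauge transformation (x,g,a) → (x',g',a') in G. Hence the induced map Desc-bar(F) on gauge equivalence classes is injective. -/
/-! Crossed groupoids (= crossed modules over groupoids), following Yekutieli,
"Combinatorial descent data for gerbes". -/

structure CrossedGroupoid : Type 1 where
  Obj : Type
  Hom : Obj → Obj → Type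
  id : ∀ x, Hom x x
  comp : ∀ {x y z}, Hom y z → Hom x y → Hom x z
  inv : ∀ {x y}, Hom x y → Hom y x
  comp_assoc : ∀ {x y z w} (h : Hom z w) (g : Hom y z) (f : Hom x y),
    comp (comp h g) f = comp h (comp g f)
  id_comp : ∀ {x y} (f : Hom x y), comp (id y) f = f
  comp_id : ∀ {x y} (f : Hom x y), comp f (id x) = f
  inv_comp : ∀ {x y} (f : Hom x y), comp (inv f) f = id x
  comp_inv : ∀ {x y} (f : Hom x y), comp f (inv f) = id y
  -- the totally disconnected groupoid 𝒢₂, i.e. a family of groups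
  G2 : Obj → Type
  mul : ∀ {x}, G2 x → G2 x → G2 x
  one : ∀ x, G2 x
  inv2 : ∀ {x}, G2 x → G2 x
  mul_assoc : ∀ {x} (a b c : G2 x), mul (mul a b) c = mul a (mul b c)
  one_mul : ∀ {x} (a : G2 x), mul (one x) a = a
  mul_one : ∀ {x} (a : G2 x), mul a (one x) = a
  inv2_mul : ∀ {x} (a : G2 x), mul (inv2 a) a = one x
  -- the twisting: an action of 𝒢₁ on 𝒢₂
  Ad : ∀ {x y}, Hom x y → G2 x → G2 y
  Ad_mul : ∀ {x y} (g : Hom x y) (a b : G2 x), Ad g (mul a b) = mul (Ad g a) (Ad g b)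
  Ad_one : ∀ {x y} (g : Hom x y), Ad g (one x) = one y
  Ad_id : ∀ {x} (a : G2 x), Ad (id x) a = a
  Ad_comp : ∀ {x y z} (h : Hom y z) (g : Hom x y) (a : G2 x),
    Ad (comp h g) a = Ad h (Ad g a)
  -- the feedback D : 𝒢₂ → 𝒢₁, identity on objects
  D : ∀ {x}, G2 x → Hom x x
  D_mul : ∀ {x} (a b : G2 x), D (mul a b) = comp (D a) (D b)
  D_one : ∀ x, D (one x) = id x
  -- equivariance of the feedback
  D_Ad : ∀ {x y} (g : Hom x y) (a : G2 x), D (Ad g a) = comp (comp g (D a)) (inv g)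
  -- Peiffer condition
  peiffer : ∀ {x} (a b : G2 x), Ad (D a) b = mul (mul a b) (inv2 a)

namespace CrossedGroupoid

/-- Transport of 1-morphisms along equalities of objects. -/
def hcast (G : CrossedGroupoid) {x x' y y' : G.Obj} (ex : x = x') (ey : y = y')
    (f : G.Hom x y) : G.Hom x' y' := ey ▸ ex ▸ f

/-- Transport of 2-morphisms along an equality of objects. -/
def cast2 (G : CrossedGroupoid) {x x' : G.Obj} (e : x = x') (a : G.G2 x) : G.G2 x' := e ▸ a

/-- The relation "isomorphic in 𝒢₁". -/
def pi0Rel (G : CrossedGroupoid) : G.Obj → G.Obj → Prop := fun x y => Nonempty (G.Hom x y)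

/-- π₀ of a crossed groupoid: isomorphism classes of objects of 𝒢₁. -/
def pi0 (G : CrossedGroupoid) : Type := Quot G.pi0Rel

/-- The right action relation on a hom-set: g' = g ∘ D(a). -/
def homRel (G : CrossedGroupoid) (x x' : G.Obj) : G.Hom x x' → G.Hom x x' → Prop :=
  fun g g' => ∃ a : G.G2 x, g' = G.comp g (G.D a)

/-- π₁(G, x, x') := 𝒢₁(x,x') / 𝒢₂(x). -/
def pi1' (G : CrossedGroupoid) (x x' : G.Obj) : Type := Quot (G.homRel x x')

/-- π₁(G, x) = Coker(D : 𝒢₂(x) → 𝒢₁(x)) as a quotient set. -/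
def pi1 (G : CrossedGroupoid) (x : G.Obj) : Type := G.pi1' x x

/-- π₂(G, x) = Ker(D : 𝒢₂(x) → 𝒢₁(x)). -/
def pi2 (G : CrossedGroupoid) (x : G.Obj) : Type := {a : G.G2 x // G.D a = G.id x}

end CrossedGroupoid

/-- A morphism of crossed groupoids. -/
structure CrossedGroupoidHom (G H : CrossedGroupoid) where
  obj : G.Obj → H.Obj
  map1 : ∀ {x y : G.Obj}, G.Hom x y → H.Hom (obj x) (obj y)
  map2 : ∀ {x : G.Obj}, G.G2 x → H.G2 (obj x)
  map1_comp : ∀ {x y z : G.Obj} (g : G.Hom y z) (f : G.Hom x y),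
    map1 (G.comp g f) = H.comp (map1 g) (map1 f)
  map1_id : ∀ x : G.Obj, map1 (G.id x) = H.id (obj x)
  map2_mul : ∀ {x : G.Obj} (a b : G.G2 x), map2 (G.mul a b) = H.mul (map2 a) (map2 b)
  map_D : ∀ {x : G.Obj} (a : G.G2 x), map1 (G.D a) = H.D (map2 a)
  map_Ad : ∀ {x y : G.Obj} (g : G.Hom x y) (a : G.G2 x),
    map2 (G.Ad g a) = H.Ad (map1 g) (map2 a)

namespace CrossedGroupoidHom

/-- Identity morphism of crossed groupoids. -/
def id (G : CrossedGroupoid) : CrossedGroupoidHom G G where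
  obj := fun x => x
  map1 := fun f => f
  map2 := fun a => a
  map1_comp := fun _ _ => rfl
  map1_id := fun _ => rfl
  map2_mul := fun _ _ => rfl
  map_D := fun _ => rfl
  map_Ad := fun _ _ => rfl

/-- Composition of morphisms of crossed groupoids. -/
def comp {G H K : CrossedGroupoid} (F₂ : CrossedGroupoidHom H K) (F₁ : CrossedGroupoidHom G H) :
    CrossedGroupoidHom G K where
  obj := fun x => F₂.obj (F₁.obj x)
  map1 := fun f => F₂.map1 (F₁.map1 f)
  map2 := fun a => F₂.map2 (F₁.map2 a)
  map1_comp := fun g f => by (try dsimp only); rw [F₁.map1_comp, F₂.map1_comp]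
  map1_id := fun x => by (try dsimp only); rw [F₁.map1_id, F₂.map1_id]
  map2_mul := fun a b => by (try dsimp only); rw [F₁.map2_mul, F₂.map2_mul]
  map_D := fun a => by (try dsimp only); rw [F₁.map_D, F₂.map_D]
  map_Ad := fun g a => by (try dsimp only); rw [F₁.map_Ad, F₂.map_Ad]

variable {G H : CrossedGroupoid}

/-- The induced map on π₀. -/
def pi0map (F : CrossedGroupoidHom G H) : G.pi0 → H.pi0 :=
  Quot.map F.obj (fun _ _ h => ⟨F.map1 h.some⟩)

/-- The induced map on π₁(−, x, x'). -/
def pi1'map (F : CrossedGroupoidHom G H) (x x' : G.Obj) :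
    G.pi1' x x' → H.pi1' (F.obj x) (F.obj x') :=
  Quot.map F.map1 (by
    rintro g g' ⟨a, rfl⟩
    exact ⟨F.map2 a, by rw [F.map1_comp, F.map_D]⟩)

/-- The induced map on π₁(−, x). -/
def pi1map (F : CrossedGroupoidHom G H) (x : G.Obj) : G.pi1 x → H.pi1 (F.obj x) :=
  F.pi1'map x x

/-- The induced map on π₂(−, x). -/
def pi2map (F : CrossedGroupoidHom G H) (x : G.Obj) : G.pi2 x → H.pi2 (F.obj x) :=
  fun a => ⟨F.map2 a.1, by rw [← F.map_D, a.2, F.map1_id]⟩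

/-- A weak equivalence of crossed groupoids: bijective on π₀, π₁ and π₂. -/
def IsWeakEquiv (F : CrossedGroupoidHom G H) : Prop :=
  Function.Bijective F.pi0map ∧ (∀ x, Function.Bijective (F.pi1map x)) ∧
    (∀ x, Function.Bijective (F.pi2map x))

end CrossedGroupoidHom

/-! ### Combinatorics of the simplex category -/

/-- The vertex (i) of Δ^q, as a monotone map Δ⁰ → Δ^q. -/
def vtxMap {q : ℕ} (i : Fin (q + 1)) : Fin 1 →o Fin (q + 1) :=
  ⟨fun _ => i, fun _ _ _ => le_rfl⟩

/-- The edge (i,j) of Δ^q, as a monotone map Δ¹ → Δ^q. -/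
def edgeMap {q : ℕ} (i j : Fin (q + 1)) (h : i ≤ j) : Fin 2 →o Fin (q + 1) :=
  ⟨fun k => if (k : ℕ) = 0 then i else j, by
    intro a b hab
    have hab' : (a : ℕ) ≤ (b : ℕ) := hab
    show (if (a : ℕ) = 0 then i else j) ≤ (if (b : ℕ) = 0 then i else j)
    by_cases ha : (a : ℕ) = 0
    · by_cases hb : (b : ℕ) = 0
      · rw [if_pos ha, if_pos hb]
      · rw [if_pos ha, if_neg hb]; exact h
    · have hb : ¬ (b : ℕ) = 0 := fun hb0 => ha (Nat.le_zero.mp (hb0 ▸ hab'))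
      rw [if_neg ha, if_neg hb]⟩

/-- The triangle (i,j,k) of Δ^q, as a monotone map Δ² → Δ^q. -/
def triMap {q : ℕ} (i j k : Fin (q + 1)) (hij : i ≤ j) (hjk : j ≤ k) :
    Fin 3 →o Fin (q + 1) :=
  ⟨fun m => if (m : ℕ) = 0 then i else if (m : ℕ) = 1 then j else k, by
    intro a b hab
    have hab' : (a : ℕ) ≤ (b : ℕ) := hab
    show (if (a : ℕ) = 0 then i else if (a : ℕ) = 1 then j else k) ≤
      (if (b : ℕ) = 0 then i else if (b : ℕ) = 1 then j else k)
    by_cases ha0 : (a : ℕ) = 0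
    · by_cases hb0 : (b : ℕ) = 0
      · rw [if_pos ha0, if_pos hb0]
      · by_cases hb1 : (b : ℕ) = 1
        · rw [if_pos ha0, if_neg hb0, if_pos hb1]; exact hij
        · rw [if_pos ha0, if_neg hb0, if_neg hb1]; exact hij.trans hjk
    · by_cases ha1 : (a : ℕ) = 1
      · have hb0 : ¬ (b : ℕ) = 0 := by omega
        by_cases hb1 : (b : ℕ) = 1
        · rw [if_neg ha0, if_pos ha1, if_neg hb0, if_pos hb1]
        · rw [if_neg ha0, if_pos ha1, if_neg hb0, if_neg hb1]; exact hjk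
      · have hb0 : ¬ (b : ℕ) = 0 := by omega
        have hb1 : ¬ (b : ℕ) = 1 := by omega
        rw [if_neg ha0, if_neg ha1, if_neg hb0, if_neg hb1]⟩

theorem comp_vtxMap {p q : ℕ} (α : Fin (p + 1) →o Fin (q + 1)) (i : Fin (p + 1)) :
    α.comp (vtxMap i) = vtxMap (α i) := rfl

/-! ### Cosimplicial crossed groupoids -/

/-- A cosimplicial crossed groupoid: a functor Δ → CrGrpd. -/
structure CosimplicialCrossedGroupoid : Type 1 where
  obj : ℕ → CrossedGroupoid
  map : ∀ {p q : ℕ}, (Fin (p + 1) →o Fin (q + 1)) → CrossedGroupoidHom (obj p) (obj q)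
  map_id : ∀ p, map (OrderHom.id : Fin (p + 1) →o Fin (p + 1)) = CrossedGroupoidHom.id (obj p)
  map_comp : ∀ {p q r : ℕ} (β : Fin (q + 1) →o Fin (r + 1)) (α : Fin (p + 1) →o Fin (q + 1)),
    map (β.comp α) = (map β).comp (map α)

namespace CosimplicialCrossedGroupoid

variable (G : CosimplicialCrossedGroupoid)

theorem obj_comp {p q r : ℕ} (β : Fin (q + 1) →o Fin (r + 1)) (α : Fin (p + 1) →o Fin (q + 1))
    (x : (G.obj p).Obj) :
    (G.map β).obj ((G.map α).obj x) = (G.map (β.comp α)).obj x := by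
  rw [G.map_comp]; rfl

/-- The object x of G⁰ pushed to the vertex (i) of Δ^q. -/
def X (x : (G.obj 0).Obj) (q : ℕ) (i : Fin (q + 1)) : (G.obj q).Obj :=
  (G.map (vtxMap i)).obj x

theorem X_push (x : (G.obj 0).Obj) {p q : ℕ} (α : Fin (p + 1) →o Fin (q + 1))
    (i : Fin (p + 1)) : (G.map α).obj (G.X x p i) = G.X x q (α i) := by
  unfold X
  rw [obj_comp, comp_vtxMap]

/-- Pushing a 1-morphism between vertex objects along α. -/
def push1 {x : (G.obj 0).Obj} {p q : ℕ} (α : Fin (p + 1) →o Fin (q + 1))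
    {i j : Fin (p + 1)} (g : (G.obj p).Hom (G.X x p i) (G.X x p j)) :
    (G.obj q).Hom (G.X x q (α i)) (G.X x q (α j)) :=
  (G.obj q).hcast (G.X_push x α i) (G.X_push x α j) ((G.map α).map1 g)

/-- Pushing a 2-morphism at a vertex object along α. -/
def push2 {x : (G.obj 0).Obj} {p q : ℕ} (α : Fin (p + 1) →o Fin (q + 1))
    {i : Fin (p + 1)} (a : (G.obj p).G2 (G.X x p i)) :
    (G.obj q).G2 (G.X x q (α i)) :=
  (G.obj q).cast2 (G.X_push x α i) ((G.map α).map2 a)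

/-- Yekutieli's combinatorial descent conditions (Definition 1.5):
the failure-of-1-cocycle condition and the twisted 2-cocycle condition. -/
def IsDescent (x : (G.obj 0).Obj)
    (g : (G.obj 1).Hom (G.X x 1 0) (G.X x 1 1))
    (a : (G.obj 2).G2 (G.X x 2 0)) : Prop :=
  ((G.obj 2).comp ((G.obj 2).comp ((G.obj 2).inv (G.push1 (edgeMap 0 2 (by decide)) g))
      (G.push1 (edgeMap 1 2 (by decide)) g)) (G.push1 (edgeMap 0 1 (by decide)) g)
    = (G.obj 2).D a)
  ∧
  ((G.obj 3).mul ((G.obj 3).mul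
        ((G.obj 3).inv2 (G.push2 (triMap 0 1 3 (by decide) (by decide)) a))
        (G.push2 (triMap 0 2 3 (by decide) (by decide)) a))
      (G.push2 (triMap 0 1 2 (by decide) (by decide)) a)
    = (G.obj 3).Ad ((G.obj 3).inv (G.push1 (edgeMap 0 1 (by decide)) g))
        (G.push2 (triMap 1 2 3 (by decide) (by decide)) a))

/-- A combinatorial descent datum (Definition 1.5). -/
structure Desc (G : CosimplicialCrossedGroupoid) where
  x : (G.obj 0).Obj
  g : (G.obj 1).Hom (G.X x 1 0) (G.X x 1 1)
  a : (G.obj 2).G2 (G.X x 2 0)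
  isDescent : G.IsDescent x g a

/-- The Yekutieli gauge-transformation conditions (Definition 1.7) for a pair (f, c). -/
def IsGauge (x : (G.obj 0).Obj) (g : (G.obj 1).Hom (G.X x 1 0) (G.X x 1 1))
    (a : (G.obj 2).G2 (G.X x 2 0))
    (x' : (G.obj 0).Obj) (g' : (G.obj 1).Hom (G.X x' 1 0) (G.X x' 1 1))
    (a' : (G.obj 2).G2 (G.X x' 2 0))
    (f : (G.obj 0).Hom x x') (c : (G.obj 1).G2 (G.X x 1 0)) : Prop :=
  (g' = (G.obj 1).comp ((G.obj 1).comp ((G.obj 1).comp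
      ((G.map (vtxMap (1 : Fin 2))).map1 f) g) ((G.obj 1).D c))
      ((G.obj 1).inv ((G.map (vtxMap (0 : Fin 2))).map1 f)))
  ∧
  (a' = (G.obj 2).Ad ((G.map (vtxMap (0 : Fin 3))).map1 f)
    ((G.obj 2).mul ((G.obj 2).mul ((G.obj 2).mul
        ((G.obj 2).inv2 (G.push2 (edgeMap 0 2 (by decide)) c)) a)
        ((G.obj 2).Ad ((G.obj 2).inv (G.push1 (edgeMap 0 1 (by decide)) g))
          (G.push2 (edgeMap 1 2 (by decide)) c)))
      (G.push2 (edgeMap 0 1 (by decide)) c)))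

/-- Gauge equivalence of descent data. -/
def GaugeEquiv (P Q : G.Desc) : Prop :=
  ∃ (f : (G.obj 0).Hom P.x Q.x) (c : (G.obj 1).G2 (G.X P.x 1 0)),
    G.IsGauge P.x P.g P.a Q.x Q.g Q.a f c

/-- The explicit formula for the transported 2-morphism a'
(Definition 1.7(ii) / Lemma 1.9). -/
def transportA {x x' : (G.obj 0).Obj} (f : (G.obj 0).Hom x x')
    (g : (G.obj 1).Hom (G.X x 1 0) (G.X x 1 1))
    (a : (G.obj 2).G2 (G.X x 2 0)) (c : (G.obj 1).G2 (G.X x 1 0)) :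
    (G.obj 2).G2 (G.X x' 2 0) :=
  (G.obj 2).Ad ((G.map (vtxMap (0 : Fin 3))).map1 f)
    ((G.obj 2).mul ((G.obj 2).mul ((G.obj 2).mul
        ((G.obj 2).inv2 (G.push2 (edgeMap 0 2 (by decide)) c)) a)
        ((G.obj 2).Ad ((G.obj 2).inv (G.push1 (edgeMap 0 1 (by decide)) g))
          (G.push2 (edgeMap 1 2 (by decide)) c)))
      (G.push2 (edgeMap 0 1 (by decide)) c))

end CosimplicialCrossedGroupoid

/-- A morphism of cosimplicial crossed groupoids. -/
structure CosimplicialMor (G H : CosimplicialCrossedGroupoid) where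
  app : ∀ p, CrossedGroupoidHom (G.obj p) (H.obj p)
  naturality : ∀ {p q : ℕ} (α : Fin (p + 1) →o Fin (q + 1)),
    (app q).comp (G.map α) = (H.map α).comp (app p)

namespace CosimplicialMor

variable {G H : CosimplicialCrossedGroupoid}

theorem app_X (F : CosimplicialMor G H) (x : (G.obj 0).Obj) (q : ℕ) (i : Fin (q + 1)) :
    (F.app q).obj (G.X x q i) = H.X ((F.app 0).obj x) q i :=
  congrFun (congrArg CrossedGroupoidHom.obj (F.naturality (vtxMap i))) x

/-- Image of an object of G⁰. -/
def objD (F : CosimplicialMor G H) (x : (G.obj 0).Obj) : (H.obj 0).Obj := (F.app 0).obj x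

/-- Image of a 1-morphism in dimension 0. -/
def mapF (F : CosimplicialMor G H) {x x' : (G.obj 0).Obj} (f : (G.obj 0).Hom x x') :
    (H.obj 0).Hom (F.objD x) (F.objD x') := (F.app 0).map1 f

/-- Image of the 1-morphism part of a descent datum. -/
def mapG (F : CosimplicialMor G H) {x : (G.obj 0).Obj}
    (g : (G.obj 1).Hom (G.X x 1 0) (G.X x 1 1)) :
    (H.obj 1).Hom (H.X (F.objD x) 1 0) (H.X (F.objD x) 1 1) :=
  (H.obj 1).hcast (F.app_X x 1 0) (F.app_X x 1 1) ((F.app 1).map1 g)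

/-- Image of the 2-morphism part of a descent datum. -/
def mapA (F : CosimplicialMor G H) {x : (G.obj 0).Obj} (a : (G.obj 2).G2 (G.X x 2 0)) :
    (H.obj 2).G2 (H.X (F.objD x) 2 0) :=
  (H.obj 2).cast2 (F.app_X x 2 0) ((F.app 2).map2 a)

/-- Image of the 2-morphism part of a gauge transformation. -/
def mapC (F : CosimplicialMor G H) {x : (G.obj 0).Obj} (c : (G.obj 1).G2 (G.X x 1 0)) :
    (H.obj 1).G2 (H.X (F.objD x) 1 0) :=
  (H.obj 1).cast2 (F.app_X x 1 0) ((F.app 1).map2 c)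

/-- A weak equivalence of cosimplicial crossed groupoids. -/
def IsWeakEquiv (F : CosimplicialMor G H) : Prop := ∀ p, (F.app p).IsWeakEquiv

end CosimplicialMor

/-!
Let `(f, c) : F(x, g, a) → F(x', g', a')`. As `F⁰` is injective on `π₀` and surjective on `π₁`,
`f = F(f₀) ∘ D(b)` for some `f₀ : x → x'`, and `D(b)` can be absorbed into `c`: `(F(f₀), c̃)` is
again a gauge transformation. Its 1-morphism condition says that `F` maps the loop
`g⁻¹ f₀₁⁻¹ g' f₀₀` to `D(c̃)`; injectivity on `π₁` and surjectivity on `π₂` give `c₁` with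
`D(c₁)` equal to that loop and `F(c₁) = c̃`, which is the 1-morphism condition for `(f₀, c₁)`.
The 2-morphism `ã` transported along `(f₀, c₁)` and `a'` then have the same image under `F`, and,
`(x', g', a')` being a descent datum, the same image under `D`, so injectivity on `π₂` gives `ã = a'`.
-/

namespace CrossedGroupoid

variable (K : CrossedGroupoid)

instance (x : K.Obj) : Group (K.G2 x) where
  mul := K.mul
  one := K.one x
  inv := K.inv2
  mul_assoc := K.mul_assoc
  one_mul := K.one_mul
  mul_one := K.mul_one
  inv_mul_cancel := K.inv2_mul

theorem mul_eq {x : K.Obj} (a b : K.G2 x) : K.mul a b = a * b := rfl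

theorem one_eq (x : K.Obj) : K.one x = 1 := rfl

theorem inv2_eq {x : K.Obj} (a : K.G2 x) : K.inv2 a = a⁻¹ := rfl

theorem eq_inv_of_comp_eq_id {x y : K.Obj} {f : K.Hom x y} {g : K.Hom y x}
    (h : K.comp g f = K.id x) : g = K.inv f := by
  rw [← K.comp_id g, ← K.comp_inv f, ← K.comp_assoc, h, K.id_comp]

theorem inv_inv {x y : K.Obj} (f : K.Hom x y) : K.inv (K.inv f) = f :=
  (K.eq_inv_of_comp_eq_id (K.comp_inv f)).symm

theorem inv_comp_cancel_left {x y z : K.Obj} (f : K.Hom x y) (h : K.Hom z x) :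
    K.comp (K.inv f) (K.comp f h) = h := by
  rw [← K.comp_assoc, K.inv_comp, K.id_comp]

theorem comp_inv_cancel_left {x y z : K.Obj} (f : K.Hom x y) (h : K.Hom z y) :
    K.comp f (K.comp (K.inv f) h) = h := by
  rw [← K.comp_assoc, K.comp_inv, K.id_comp]

theorem inv_comp_rev {x y z : K.Obj} (g : K.Hom y z) (f : K.Hom x y) :
    K.inv (K.comp g f) = K.comp (K.inv f) (K.inv g) :=
  (K.eq_inv_of_comp_eq_id (by rw [K.comp_assoc, K.inv_comp_cancel_left, K.inv_comp])).symm

theorem D_inv2 {x : K.Obj} (a : K.G2 x) : K.D (K.inv2 a) = K.inv (K.D a) :=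
  K.eq_inv_of_comp_eq_id (by rw [← K.D_mul, K.inv2_mul, K.D_one])

theorem Ad_inv2 {x y : K.Obj} (g : K.Hom x y) (a : K.G2 x) :
    K.Ad g (K.inv2 a) = K.inv2 (K.Ad g a) :=
  eq_inv_of_mul_eq_one_left (by rw [← K.mul_eq, ← K.Ad_mul, K.inv2_mul, K.Ad_one]; rfl)

theorem pi0_exact {x y : K.Obj} (h : Quot.mk K.pi0Rel x = Quot.mk K.pi0Rel y) :
    Nonempty (K.Hom x y) :=
  have hequiv : Equivalence K.pi0Rel :=
    ⟨fun x => ⟨K.id x⟩, fun ⟨f⟩ => ⟨K.inv f⟩, fun ⟨f⟩ ⟨g⟩ => ⟨K.comp g f⟩⟩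
  hequiv.eqvGen_iff.mp (Quot.eq.mp h)

theorem homRel_exact {x y : K.Obj} {g g' : K.Hom x y}
    (h : Quot.mk (K.homRel x y) g = Quot.mk (K.homRel x y) g') : K.homRel x y g g' :=
  have hequiv : Equivalence (K.homRel x y) :=
    ⟨fun g => ⟨1, by rw [← K.one_eq, K.D_one, K.comp_id]⟩,
     fun ⟨a, ha⟩ => ⟨a⁻¹, by rw [ha, K.comp_assoc, ← K.D_mul, K.mul_eq, mul_inv_cancel,
       ← K.one_eq, K.D_one, K.comp_id]⟩,
     fun ⟨a, ha⟩ ⟨b, hb⟩ => ⟨a * b, by rw [hb, ha, K.comp_assoc, ← K.D_mul]; rfl⟩⟩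
  hequiv.eqvGen_iff.mp (Quot.eq.mp h)

/-- In the bracket `c₀₂⁻¹ A Ad(γ₀₁⁻¹)(c₁₂) c₀₁` of the gauge formula for `a'`, replacing each
`cᵢⱼ` by `Ad(γᵢⱼ⁻¹)(bⱼ) cᵢⱼ bᵢ⁻¹` conjugates the bracket by `b₀`. -/
theorem gaugeTerm_shift {x₀ x₁ x₂ : K.Obj} {γ₀₁ : K.Hom x₀ x₁} {γ₁₂ : K.Hom x₁ x₂}
    {γ₀₂ : K.Hom x₀ x₂} {A : K.G2 x₀}
    (hA : K.D A = K.comp (K.comp (K.inv γ₀₂) γ₁₂) γ₀₁)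
    (b₀ c₀₁ c₀₂ : K.G2 x₀) (b₁ c₁₂ : K.G2 x₁) (b₂ : K.G2 x₂) :
    K.mul (K.mul (K.mul
        (K.inv2 (K.mul (K.mul (K.Ad (K.inv γ₀₂) b₂) c₀₂) (K.inv2 b₀))) A)
        (K.Ad (K.inv γ₀₁) (K.mul (K.mul (K.Ad (K.inv γ₁₂) b₂) c₁₂) (K.inv2 b₁))))
        (K.mul (K.mul (K.Ad (K.inv γ₀₁) b₁) c₀₁) (K.inv2 b₀))
      = K.Ad (K.D b₀)
          (K.mul (K.mul (K.mul (K.inv2 c₀₂) A) (K.Ad (K.inv γ₀₁) c₁₂)) c₀₁) := by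
  have hγ : K.comp γ₁₂ γ₀₁ = K.comp γ₀₂ (K.D A) := by
    rw [hA, K.comp_assoc, K.comp_inv_cancel_left]
  -- Peiffer: `Ad(D A⁻¹)` is conjugation by `A⁻¹`.
  have hb₂ : K.Ad (K.inv γ₀₁) (K.Ad (K.inv γ₁₂) b₂)
      = K.mul (K.mul (K.inv2 A) (K.Ad (K.inv γ₀₂) b₂)) A := by
    rw [← K.Ad_comp, ← K.inv_comp_rev, hγ, K.inv_comp_rev, ← K.D_inv2, K.Ad_comp,
      K.peiffer, K.inv2_eq, K.inv2_eq, _root_.inv_inv]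
  rw [K.Ad_mul, K.Ad_mul, K.Ad_inv2, hb₂, K.peiffer]
  simp only [K.mul_eq, K.inv2_eq]
  group

theorem D_Ad_gaugeTerm {x₀ x₁ x₂ y₀ y₁ y₂ : K.Obj}
    (v₀ : K.Hom x₀ y₀) (v₁ : K.Hom x₁ y₁) (v₂ : K.Hom x₂ y₂)
    {g₀₁ : K.Hom x₀ x₁} {g₁₂ : K.Hom x₁ x₂} {g₀₂ : K.Hom x₀ x₂} {a : K.G2 x₀}
    (ha : K.D a = K.comp (K.comp (K.inv g₀₂) g₁₂) g₀₁)
    (c₀₁ c₀₂ : K.G2 x₀) (c₁₂ : K.G2 x₁) :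
    K.D (K.Ad v₀ (K.mul (K.mul (K.mul (K.inv2 c₀₂) a) (K.Ad (K.inv g₀₁) c₁₂)) c₀₁))
      = K.comp (K.comp
          (K.inv (K.comp (K.comp (K.comp v₂ g₀₂) (K.D c₀₂)) (K.inv v₀)))
          (K.comp (K.comp (K.comp v₂ g₁₂) (K.D c₁₂)) (K.inv v₁)))
          (K.comp (K.comp (K.comp v₁ g₀₁) (K.D c₀₁)) (K.inv v₀)) := by
  rw [K.D_Ad, K.D_mul, K.D_mul, K.D_mul, K.D_inv2, K.D_Ad, ha]
  simp only [K.comp_assoc, K.inv_comp_rev, K.inv_inv, K.inv_comp_cancel_left,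
    K.comp_inv_cancel_left]

variable {K}

theorem hcast_hcast {x x' x'' y y' y'' : K.Obj} (ex : x = x') (ex' : x' = x'')
    (ey : y = y') (ey' : y' = y'') (f : K.Hom x y) :
    K.hcast ex' ey' (K.hcast ex ey f) = K.hcast (ex.trans ex') (ey.trans ey') f := by
  subst ex ey; rfl

theorem hcast_comp {x y z x' y' z' : K.Obj} (ex : x = x') (ey : y = y') (ez : z = z')
    (g : K.Hom y z) (f : K.Hom x y) :
    K.hcast ex ez (K.comp g f) = K.comp (K.hcast ey ez g) (K.hcast ex ey f) := by
  subst ex ey ez; rfl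

theorem hcast_inv {x y x' y' : K.Obj} (ex : x = x') (ey : y = y') (f : K.Hom x y) :
    K.hcast ey ex (K.inv f) = K.inv (K.hcast ex ey f) := by
  subst ex ey; rfl

theorem cast2_cast2 {x x' x'' : K.Obj} (e : x = x') (e' : x' = x'') (a : K.G2 x) :
    K.cast2 e' (K.cast2 e a) = K.cast2 (e.trans e') a := by
  subst e; rfl

theorem cast2_injective {x x' : K.Obj} (e : x = x') : Function.Injective (K.cast2 e) := by
  subst e; exact fun _ _ h => h

theorem cast2_mul {x x' : K.Obj} (e : x = x') (a b : K.G2 x) :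
    K.cast2 e (K.mul a b) = K.mul (K.cast2 e a) (K.cast2 e b) := by
  subst e; rfl

theorem cast2_inv2 {x x' : K.Obj} (e : x = x') (a : K.G2 x) :
    K.cast2 e (K.inv2 a) = K.inv2 (K.cast2 e a) := by
  subst e; rfl

theorem D_cast2 {x x' : K.Obj} (e : x = x') (a : K.G2 x) :
    K.D (K.cast2 e a) = K.hcast e e (K.D a) := by
  subst e; rfl

theorem Ad_hcast {x y x' y' : K.Obj} (ex : x = x') (ey : y = y') (g : K.Hom x y)
    (a : K.G2 x) : K.Ad (K.hcast ex ey g) (K.cast2 ex a) = K.cast2 ey (K.Ad g a) := by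
  subst ex ey; rfl

end CrossedGroupoid

namespace CrossedGroupoidHom

variable {K L : CrossedGroupoid} (F : CrossedGroupoidHom K L)

theorem map1_inv {x y : K.Obj} (f : K.Hom x y) : F.map1 (K.inv f) = L.inv (F.map1 f) :=
  L.eq_inv_of_comp_eq_id (by rw [← F.map1_comp, K.inv_comp, F.map1_id])

theorem map2_one (x : K.Obj) : F.map2 (K.one x) = L.one (F.obj x) :=
  mul_left_cancel (a := F.map2 (K.one x)) (by
    rw [← L.mul_eq, ← F.map2_mul, K.mul_one]; exact (mul_one _).symm)

theorem map2_inv2 {x : K.Obj} (a : K.G2 x) : F.map2 (K.inv2 a) = L.inv2 (F.map2 a) :=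
  eq_inv_of_mul_eq_one_left (by rw [← L.mul_eq, ← F.map2_mul, K.inv2_mul, F.map2_one]; rfl)

theorem map1_hcast {x y x' y' : K.Obj} (ex : x = x') (ey : y = y') (f : K.Hom x y) :
    F.map1 (K.hcast ex ey f) = L.hcast (congrArg F.obj ex) (congrArg F.obj ey) (F.map1 f) := by
  subst ex ey; rfl

theorem map2_cast2 {x x' : K.Obj} (e : x = x') (a : K.G2 x) :
    F.map2 (K.cast2 e a) = L.cast2 (congrArg F.obj e) (F.map2 a) := by
  subst e; rfl

theorem hcast_map1_congr {F' : CrossedGroupoidHom K L} (h : F = F') {x y : K.Obj}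
    (f : K.Hom x y) {x' y' : L.Obj} (ex : F.obj x = x') (ey : F.obj y = y')
    (ex' : F'.obj x = x') (ey' : F'.obj y = y') :
    L.hcast ex ey (F.map1 f) = L.hcast ex' ey' (F'.map1 f) := by
  subst h; rfl

theorem cast2_map2_congr {F' : CrossedGroupoidHom K L} (h : F = F') {x : K.Obj} (a : K.G2 x)
    {x' : L.Obj} (e : F.obj x = x') (e' : F'.obj x = x') :
    L.cast2 e (F.map2 a) = L.cast2 e' (F'.map2 a) := by
  subst h; rfl

theorem exists_eq_comp_D (h₀ : Function.Injective F.pi0map)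
    (h₁ : ∀ y, Function.Surjective (F.pi1map y)) {x y : K.Obj} (f : L.Hom (F.obj x) (F.obj y)) :
    ∃ (f₀ : K.Hom x y) (b : L.G2 (F.obj x)), f = L.comp (F.map1 f₀) (L.D b) := by
  have hx : F.pi0map (Quot.mk _ x) = F.pi0map (Quot.mk _ y) := Quot.sound ⟨f⟩
  obtain ⟨f₁⟩ := K.pi0_exact (h₀ hx)
  obtain ⟨⟨u⟩, hu⟩ := h₁ y (Quot.mk _ (L.comp f (L.inv (F.map1 f₁))))
  obtain ⟨b, hb⟩ := L.homRel_exact hu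
  refine ⟨K.comp u f₁, L.Ad (L.inv (F.map1 f₁)) b, ?_⟩
  rw [F.map1_comp, L.D_Ad, L.inv_inv, L.comp_assoc, L.comp_assoc, L.comp_inv_cancel_left,
    ← L.comp_assoc, ← hb, L.comp_assoc, L.inv_comp, L.comp_id]

theorem exists_D_eq_of_map1_eq_D (h₁ : ∀ y, Function.Injective (F.pi1map y))
    (h₂ : ∀ y, Function.Surjective (F.pi2map y)) {y : K.Obj} {h : K.Hom y y}
    {c : L.G2 (F.obj y)} (hc : F.map1 h = L.D c) :
    ∃ c₀ : K.G2 y, h = K.D c₀ ∧ F.map2 c₀ = c := by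
  have hq : F.pi1map y (Quot.mk _ (K.id y)) = F.pi1map y (Quot.mk _ h) :=
    Quot.sound ⟨c, by rw [F.map1_id, L.id_comp, hc]⟩
  obtain ⟨c₁, hc₁⟩ := K.homRel_exact (h₁ y hq)
  rw [K.id_comp] at hc₁
  -- `c (F c₁)⁻¹` lies in π₂, so it lifts; the lift corrects `c₁` without changing `D c₁`.
  obtain ⟨⟨e, he⟩, hFe⟩ := h₂ y ⟨c * (F.map2 c₁)⁻¹, by
    rw [← L.mul_eq, ← L.inv2_eq, L.D_mul, L.D_inv2, ← F.map_D, ← hc₁, hc, L.comp_inv]⟩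
  have hFe' : F.map2 e = c * (F.map2 c₁)⁻¹ := congrArg Subtype.val hFe
  refine ⟨e * c₁, by rw [← K.mul_eq, K.D_mul, he, K.id_comp, hc₁], ?_⟩
  rw [← K.mul_eq, F.map2_mul, hFe', L.mul_eq, inv_mul_cancel_right]

theorem eq_of_D_eq_of_map2_eq (h₂ : ∀ y, Function.Injective (F.pi2map y)) {y : K.Obj}
    {a b : K.G2 y} (hD : K.D a = K.D b) (hF : F.map2 a = F.map2 b) : a = b := by
  have hδ : K.D (b⁻¹ * a) = K.id y := by
    rw [← K.inv2_eq, ← K.mul_eq, K.D_mul, K.D_inv2, hD, K.inv_comp]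
  have hFδ : F.pi2map y ⟨b⁻¹ * a, hδ⟩ = F.pi2map y ⟨1, K.D_one y⟩ := Subtype.ext (by
    change F.map2 (K.mul (K.inv2 b) a) = F.map2 (K.one y)
    rw [F.map2_mul, F.map2_inv2, hF, L.inv2_mul, F.map2_one])
  exact (inv_mul_eq_one.mp (congrArg Subtype.val (h₂ y hFδ))).symm

end CrossedGroupoidHom

namespace CosimplicialCrossedGroupoid

variable (G : CosimplicialCrossedGroupoid)

def push1' {x x' : (G.obj 0).Obj} {p q : ℕ} (α : Fin (p + 1) →o Fin (q + 1))
    {i j : Fin (p + 1)} (g : (G.obj p).Hom (G.X x p i) (G.X x' p j)) :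
    (G.obj q).Hom (G.X x q (α i)) (G.X x' q (α j)) :=
  (G.obj q).hcast (G.X_push x α i) (G.X_push x' α j) ((G.map α).map1 g)

/-- `(G.map (vtxMap i)).map1 f`, typed with the objects `G.X _ q i` so that composites built from
it are syntactically well-typed for `rw` and `simp`. -/
def vtx1 {x x' : (G.obj 0).Obj} (q : ℕ) (i : Fin (q + 1)) (f : (G.obj 0).Hom x x') :
    (G.obj q).Hom (G.X x q i) (G.X x' q i) :=
  (G.map (vtxMap i)).map1 f

def vtx2 {x : (G.obj 0).Obj} (q : ℕ) (i : Fin (q + 1)) (b : (G.obj 0).G2 x) :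
    (G.obj q).G2 (G.X x q i) :=
  (G.map (vtxMap i)).map2 b

def cocycleDefect {x : (G.obj 0).Obj} (g : (G.obj 1).Hom (G.X x 1 0) (G.X x 1 1)) :
    (G.obj 2).Hom (G.X x 2 0) (G.X x 2 0) :=
  (G.obj 2).comp ((G.obj 2).comp ((G.obj 2).inv (G.push1 (edgeMap 0 2 (by decide)) g))
    (G.push1 (edgeMap 1 2 (by decide)) g)) (G.push1 (edgeMap 0 1 (by decide)) g)

def transportG {x x' : (G.obj 0).Obj} (f : (G.obj 0).Hom x x')
    (g : (G.obj 1).Hom (G.X x 1 0) (G.X x 1 1)) (c : (G.obj 1).G2 (G.X x 1 0)) :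
    (G.obj 1).Hom (G.X x' 1 0) (G.X x' 1 1) :=
  (G.obj 1).comp ((G.obj 1).comp ((G.obj 1).comp (G.vtx1 1 1 f) g) ((G.obj 1).D c))
    ((G.obj 1).inv (G.vtx1 1 0 f))

def gaugeLoop {x x' : (G.obj 0).Obj} (f : (G.obj 0).Hom x x')
    (g : (G.obj 1).Hom (G.X x 1 0) (G.X x 1 1)) (g' : (G.obj 1).Hom (G.X x' 1 0) (G.X x' 1 1)) :
    (G.obj 1).Hom (G.X x 1 0) (G.X x 1 0) :=
  (G.obj 1).comp ((G.obj 1).inv g)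
    ((G.obj 1).comp ((G.obj 1).inv (G.vtx1 1 1 f)) ((G.obj 1).comp g' (G.vtx1 1 0 f)))

/-- The 2-morphism `c̃` for which `(f ∘ D b, c)` and `(f, c̃)` are gauge transformations
between the same descent data. -/
def gaugeShift {x : (G.obj 0).Obj} (g : (G.obj 1).Hom (G.X x 1 0) (G.X x 1 1))
    (b : (G.obj 0).G2 x) (c : (G.obj 1).G2 (G.X x 1 0)) : (G.obj 1).G2 (G.X x 1 0) :=
  (G.obj 1).mul ((G.obj 1).mul ((G.obj 1).Ad ((G.obj 1).inv g) (G.vtx2 1 1 b)) c)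
    ((G.obj 1).inv2 (G.vtx2 1 0 b))

variable {G}

section Push

variable {x x' x'' : (G.obj 0).Obj} {p q : ℕ} (α : Fin (p + 1) →o Fin (q + 1))

theorem push1_eq_push1' {i j : Fin (p + 1)} (g : (G.obj p).Hom (G.X x p i) (G.X x p j)) :
    G.push1 α g = G.push1' α g := rfl

theorem push1'_comp {i j k : Fin (p + 1)} (g : (G.obj p).Hom (G.X x' p j) (G.X x'' p k))
    (f : (G.obj p).Hom (G.X x p i) (G.X x' p j)) :
    G.push1' α ((G.obj p).comp g f) = (G.obj q).comp (G.push1' α g) (G.push1' α f) := by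
  unfold push1'
  rw [(G.map α).map1_comp, CrossedGroupoid.hcast_comp _ (G.X_push x' α j)]

theorem push1'_inv {i j : Fin (p + 1)} (f : (G.obj p).Hom (G.X x p i) (G.X x' p j)) :
    G.push1' α ((G.obj p).inv f) = (G.obj q).inv (G.push1' α f) := by
  unfold push1'
  rw [(G.map α).map1_inv, CrossedGroupoid.hcast_inv]

theorem push1'_D {i : Fin (p + 1)} (a : (G.obj p).G2 (G.X x p i)) :
    G.push1' α ((G.obj p).D a) = (G.obj q).D (G.push2 α a) := by
  unfold push1' push2
  rw [(G.map α).map_D, CrossedGroupoid.D_cast2]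

theorem push2_mul {i : Fin (p + 1)} (a b : (G.obj p).G2 (G.X x p i)) :
    G.push2 α ((G.obj p).mul a b) = (G.obj q).mul (G.push2 α a) (G.push2 α b) := by
  unfold push2
  rw [(G.map α).map2_mul, CrossedGroupoid.cast2_mul]

theorem push2_inv2 {i : Fin (p + 1)} (a : (G.obj p).G2 (G.X x p i)) :
    G.push2 α ((G.obj p).inv2 a) = (G.obj q).inv2 (G.push2 α a) := by
  unfold push2
  rw [(G.map α).map2_inv2, CrossedGroupoid.cast2_inv2]

theorem push2_Ad {i j : Fin (p + 1)} (g : (G.obj p).Hom (G.X x p i) (G.X x' p j))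
    (a : (G.obj p).G2 (G.X x p i)) :
    G.push2 α ((G.obj p).Ad g a) = (G.obj q).Ad (G.push1' α g) (G.push2 α a) := by
  unfold push2 push1'
  rw [(G.map α).map_Ad, CrossedGroupoid.Ad_hcast]

theorem push1'_vtx1 (i : Fin (p + 1)) (f : (G.obj 0).Hom x x') :
    G.push1' α (G.vtx1 p i f) = G.vtx1 q (α i) f :=
  CrossedGroupoidHom.hcast_map1_congr (F := (G.map α).comp (G.map (vtxMap i)))
    (by rw [← G.map_comp, comp_vtxMap]) f (G.X_push x α i) (G.X_push x' α i) rfl rfl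

theorem push2_vtx2 (i : Fin (p + 1)) (b : (G.obj 0).G2 x) :
    G.push2 α (G.vtx2 p i b) = G.vtx2 q (α i) b :=
  CrossedGroupoidHom.cast2_map2_congr (F := (G.map α).comp (G.map (vtxMap i)))
    (by rw [← G.map_comp, comp_vtxMap]) b (G.X_push x α i) rfl

end Push

section Gauge

variable {x x' : (G.obj 0).Obj} (f : (G.obj 0).Hom x x')
  (g : (G.obj 1).Hom (G.X x 1 0) (G.X x 1 1)) (a : (G.obj 2).G2 (G.X x 2 0))
  (c : (G.obj 1).G2 (G.X x 1 0))

theorem isGauge_iff (g' : (G.obj 1).Hom (G.X x' 1 0) (G.X x' 1 1))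
    (a' : (G.obj 2).G2 (G.X x' 2 0)) :
    G.IsGauge x g a x' g' a' f c ↔ g' = G.transportG f g c ∧ a' = G.transportA f g a c :=
  Iff.rfl

theorem eq_transportG_iff {g' : (G.obj 1).Hom (G.X x' 1 0) (G.X x' 1 1)} :
    g' = G.transportG f g c ↔ G.gaugeLoop f g g' = (G.obj 1).D c := by
  constructor
  · rintro rfl
    simp only [transportG, gaugeLoop, CrossedGroupoid.comp_assoc,
      CrossedGroupoid.inv_comp_cancel_left, CrossedGroupoid.inv_comp, CrossedGroupoid.comp_id]
  · intro h
    simp only [transportG, ← h, gaugeLoop, CrossedGroupoid.comp_assoc,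
      CrossedGroupoid.comp_inv_cancel_left, CrossedGroupoid.comp_inv, CrossedGroupoid.comp_id]

theorem push1_transportG {q : ℕ} (i j : Fin (q + 1)) (hij : i ≤ j) :
    G.push1 (edgeMap i j hij) (G.transportG f g c)
      = (G.obj q).comp ((G.obj q).comp ((G.obj q).comp (G.vtx1 q j f)
          (G.push1 (edgeMap i j hij) g)) ((G.obj q).D (G.push2 (edgeMap i j hij) c)))
          ((G.obj q).inv (G.vtx1 q i f)) := by
  rw [push1_eq_push1', transportG, push1'_comp, push1'_comp, push1'_comp, push1'_inv, push1'_D,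
    push1'_vtx1, push1'_vtx1]
  rfl

theorem push2_gaugeShift (b : (G.obj 0).G2 x) {q : ℕ} (i j : Fin (q + 1)) (hij : i ≤ j) :
    G.push2 (edgeMap i j hij) (G.gaugeShift g b c)
      = (G.obj q).mul ((G.obj q).mul ((G.obj q).Ad ((G.obj q).inv (G.push1 (edgeMap i j hij) g))
          (G.vtx2 q j b)) (G.push2 (edgeMap i j hij) c)) ((G.obj q).inv2 (G.vtx2 q i b)) := by
  rw [gaugeShift, push2_mul, push2_mul, push2_inv2, push2_Ad, push1'_inv, push2_vtx2,
    push2_vtx2]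
  rfl

theorem vtx1_comp_D {q : ℕ} (i : Fin (q + 1)) (b : (G.obj 0).G2 x) :
    G.vtx1 q i ((G.obj 0).comp f ((G.obj 0).D b))
      = (G.obj q).comp (G.vtx1 q i f) ((G.obj q).D (G.vtx2 q i b)) := by
  rw [vtx1, CrossedGroupoidHom.map1_comp, CrossedGroupoidHom.map_D]
  rfl

theorem transportG_comp_D (b : (G.obj 0).G2 x) :
    G.transportG ((G.obj 0).comp f ((G.obj 0).D b)) g c
      = G.transportG f g (G.gaugeShift g b c) := by
  simp only [transportG, gaugeShift, vtx1_comp_D, CrossedGroupoid.D_mul,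
    CrossedGroupoid.D_inv2, CrossedGroupoid.D_Ad, CrossedGroupoid.inv_inv,
    CrossedGroupoid.inv_comp_rev, CrossedGroupoid.comp_assoc, CrossedGroupoid.comp_inv_cancel_left]

theorem transportA_comp_D (ha : (G.obj 2).D a = G.cocycleDefect g) (b : (G.obj 0).G2 x) :
    G.transportA ((G.obj 0).comp f ((G.obj 0).D b)) g a c
      = G.transportA f g a (G.gaugeShift g b c) := by
  rw [transportA, transportA, push2_gaugeShift, push2_gaugeShift, push2_gaugeShift]
  erw [(G.obj 2).gaugeTerm_shift ha, CrossedGroupoidHom.map1_comp, CrossedGroupoidHom.map_D,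
    CrossedGroupoid.Ad_comp]
  rfl

theorem D_transportA (ha : (G.obj 2).D a = G.cocycleDefect g) :
    (G.obj 2).D (G.transportA f g a c) = G.cocycleDefect (G.transportG f g c) := by
  rw [cocycleDefect, push1_transportG, push1_transportG, push1_transportG]
  exact (G.obj 2).D_Ad_gaugeTerm _ _ _ ha _ _ _

end Gauge

end CosimplicialCrossedGroupoid

namespace CosimplicialMor

variable {G H : CosimplicialCrossedGroupoid} (F : CosimplicialMor G H)

/-- `app_X` with `F.objD` in its type, the form in which `F.mapG`, `F.mapA`, `F.mapC` are typed. -/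
theorem app_X_objD (x : (G.obj 0).Obj) (q : ℕ) (i : Fin (q + 1)) :
    (F.app q).obj (G.X x q i) = H.X (F.objD x) q i :=
  F.app_X x q i

def map1X {x x' : (G.obj 0).Obj} {p : ℕ} {i j : Fin (p + 1)}
    (g : (G.obj p).Hom (G.X x p i) (G.X x' p j)) :
    (H.obj p).Hom (H.X (F.objD x) p i) (H.X (F.objD x') p j) :=
  (H.obj p).hcast (F.app_X_objD x p i) (F.app_X_objD x' p j) ((F.app p).map1 g)

def map2X {x : (G.obj 0).Obj} {p : ℕ} {i : Fin (p + 1)} (a : (G.obj p).G2 (G.X x p i)) :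
    (H.obj p).G2 (H.X (F.objD x) p i) :=
  (H.obj p).cast2 (F.app_X_objD x p i) ((F.app p).map2 a)

section Naturality

variable {x x' x'' : (G.obj 0).Obj} {p : ℕ}

theorem map1X_comp {i j k : Fin (p + 1)} (g : (G.obj p).Hom (G.X x' p j) (G.X x'' p k))
    (f : (G.obj p).Hom (G.X x p i) (G.X x' p j)) :
    F.map1X ((G.obj p).comp g f) = (H.obj p).comp (F.map1X g) (F.map1X f) := by
  unfold map1X
  rw [(F.app p).map1_comp, CrossedGroupoid.hcast_comp _ (F.app_X_objD x' p j)]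

theorem map1X_inv {i j : Fin (p + 1)} (f : (G.obj p).Hom (G.X x p i) (G.X x' p j)) :
    F.map1X ((G.obj p).inv f) = (H.obj p).inv (F.map1X f) := by
  unfold map1X
  rw [(F.app p).map1_inv, CrossedGroupoid.hcast_inv]

theorem map1X_D {i : Fin (p + 1)} (a : (G.obj p).G2 (G.X x p i)) :
    F.map1X ((G.obj p).D a) = (H.obj p).D (F.map2X a) := by
  unfold map1X map2X
  rw [(F.app p).map_D, CrossedGroupoid.D_cast2]

theorem map2X_mul {i : Fin (p + 1)} (a b : (G.obj p).G2 (G.X x p i)) :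
    F.map2X ((G.obj p).mul a b) = (H.obj p).mul (F.map2X a) (F.map2X b) := by
  unfold map2X
  rw [(F.app p).map2_mul, CrossedGroupoid.cast2_mul]

theorem map2X_inv2 {i : Fin (p + 1)} (a : (G.obj p).G2 (G.X x p i)) :
    F.map2X ((G.obj p).inv2 a) = (H.obj p).inv2 (F.map2X a) := by
  unfold map2X
  rw [(F.app p).map2_inv2, CrossedGroupoid.cast2_inv2]

theorem map2X_Ad {i j : Fin (p + 1)} (g : (G.obj p).Hom (G.X x p i) (G.X x' p j))
    (a : (G.obj p).G2 (G.X x p i)) :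
    F.map2X ((G.obj p).Ad g a) = (H.obj p).Ad (F.map1X g) (F.map2X a) := by
  unfold map2X map1X
  rw [(F.app p).map_Ad, CrossedGroupoid.Ad_hcast]

theorem map1X_push1' {q : ℕ} (α : Fin (p + 1) →o Fin (q + 1)) {i j : Fin (p + 1)}
    (g : (G.obj p).Hom (G.X x p i) (G.X x' p j)) :
    F.map1X (G.push1' α g) = H.push1' α (F.map1X g) := by
  unfold map1X CosimplicialCrossedGroupoid.push1'
  rw [(F.app q).map1_hcast, CrossedGroupoid.hcast_hcast, (H.map α).map1_hcast,
    CrossedGroupoid.hcast_hcast]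
  exact CrossedGroupoidHom.hcast_map1_congr (F := (F.app q).comp (G.map α))
    (F.naturality α) g _ _ _ _

theorem map2X_push2 {q : ℕ} (α : Fin (p + 1) →o Fin (q + 1)) {i : Fin (p + 1)}
    (a : (G.obj p).G2 (G.X x p i)) :
    F.map2X (G.push2 α a) = H.push2 α (F.map2X a) := by
  unfold map2X CosimplicialCrossedGroupoid.push2
  rw [(F.app q).map2_cast2, CrossedGroupoid.cast2_cast2, (H.map α).map2_cast2,
    CrossedGroupoid.cast2_cast2]
  exact CrossedGroupoidHom.cast2_map2_congr (F := (F.app q).comp (G.map α))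
    (F.naturality α) a _ _

theorem map1X_vtx1 (i : Fin (p + 1)) (f : (G.obj 0).Hom x x') :
    F.map1X (G.vtx1 p i f) = H.vtx1 p i (F.mapF f) :=
  CrossedGroupoidHom.hcast_map1_congr (F := (F.app p).comp (G.map (vtxMap i)))
    (F.naturality (vtxMap i)) f (F.app_X_objD x p i) (F.app_X_objD x' p i) rfl rfl

end Naturality

section Gauge

variable {x x' : (G.obj 0).Obj} (f : (G.obj 0).Hom x x')
  (g : (G.obj 1).Hom (G.X x 1 0) (G.X x 1 1)) (a : (G.obj 2).G2 (G.X x 2 0))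

theorem map1X_cocycleDefect :
    F.map1X (G.cocycleDefect g) = H.cocycleDefect (F.mapG g) := by
  unfold CosimplicialCrossedGroupoid.cocycleDefect
  erw [map1X_comp, map1X_comp, map1X_inv, G.push1_eq_push1', G.push1_eq_push1',
    G.push1_eq_push1', map1X_push1', map1X_push1', map1X_push1']
  rfl

theorem D_mapA (ha : (G.obj 2).D a = G.cocycleDefect g) :
    (H.obj 2).D (F.mapA a) = H.cocycleDefect (F.mapG g) := by
  rw [← F.map1X_cocycleDefect, ← ha, map1X_D]
  rfl

theorem map1X_gaugeLoop (g' : (G.obj 1).Hom (G.X x' 1 0) (G.X x' 1 1)) :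
    F.map1X (G.gaugeLoop f g g') = H.gaugeLoop (F.mapF f) (F.mapG g) (F.mapG g') := by
  unfold CosimplicialCrossedGroupoid.gaugeLoop
  rw [map1X_comp, map1X_comp, map1X_comp, map1X_inv, map1X_inv, map1X_vtx1, map1X_vtx1]
  rfl

theorem mapA_transportA (c : (G.obj 1).G2 (G.X x 1 0)) :
    F.mapA (G.transportA f g a c)
      = H.transportA (F.mapF f) (F.mapG g) (F.mapA a) (F.mapC c) := by
  change F.map2X ((G.obj 2).Ad (G.vtx1 2 0 f) _) = _
  erw [map2X_Ad, map2X_mul, map2X_mul, map2X_mul, map2X_inv2, map2X_Ad, map1X_inv, map1X_vtx1,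
    G.push1_eq_push1', map1X_push1', map2X_push2, map2X_push2, map2X_push2]
  rfl

end Gauge

variable {x : (G.obj 0).Obj} {p : ℕ} {i : Fin (p + 1)}

theorem exists_D_eq_of_map1X_eq_D (h₁ : ∀ y, Function.Injective ((F.app p).pi1map y))
    (h₂ : ∀ y, Function.Surjective ((F.app p).pi2map y)) {h : (G.obj p).Hom (G.X x p i) (G.X x p i)}
    {c : (H.obj p).G2 (H.X (F.objD x) p i)} (hc : F.map1X h = (H.obj p).D c) :
    ∃ c₀, h = (G.obj p).D c₀ ∧ F.map2X c₀ = c := by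
  have e := F.app_X_objD x p i
  obtain ⟨c₀, hc₀, hFc₀⟩ := (F.app p).exists_D_eq_of_map1_eq_D h₁ h₂
    (c := (H.obj p).cast2 e.symm c) (by
      rw [CrossedGroupoid.D_cast2, ← hc, map1X, CrossedGroupoid.hcast_hcast]
      rfl)
  refine ⟨c₀, hc₀, ?_⟩
  rw [map2X, hFc₀, CrossedGroupoid.cast2_cast2]
  rfl

theorem eq_of_D_eq_of_map2X_eq (h₂ : ∀ y, Function.Injective ((F.app p).pi2map y))
    {a a' : (G.obj p).G2 (G.X x p i)} (hD : (G.obj p).D a = (G.obj p).D a')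
    (hF : F.map2X a = F.map2X a') : a = a' :=
  (F.app p).eq_of_D_eq_of_map2_eq h₂ hD (CrossedGroupoid.cast2_injective _ hF)

end CosimplicialMor

/-- injectivity half of the main theorem: if the images of two
descent data are gauge equivalent, then so are the descent data themselves. -/
theorem main_injective {G H : CosimplicialCrossedGroupoid} (F : CosimplicialMor G H)
    (hF : F.IsWeakEquiv) (P P' : G.Desc)
    (him : ∃ (f : (H.obj 0).Hom (F.objD P.x) (F.objD P'.x))
      (c : (H.obj 1).G2 (H.X (F.objD P.x) 1 0)),
      H.IsGauge (F.objD P.x) (F.mapG P.g) (F.mapA P.a)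
        (F.objD P'.x) (F.mapG P'.g) (F.mapA P'.a) f c) :
    G.GaugeEquiv P P' := by
  obtain ⟨f, c, hg', ha'⟩ := him
  obtain ⟨f₀, b, rfl⟩ := (F.app 0).exists_eq_comp_D (hF 0).1.1 (fun y => ((hF 0).2.1 y).2) f
  have hDa : (H.obj 2).D (F.mapA P.a) = H.cocycleDefect (F.mapG P.g) :=
    F.D_mapA P.g P.a P.isDescent.1.symm
  replace hg' := hg'.trans (H.transportG_comp_D _ _ _ b)
  replace ha' := ha'.trans (H.transportA_comp_D _ _ _ _ hDa b)
  obtain ⟨c₁, hc₁, hFc₁⟩ := F.exists_D_eq_of_map1X_eq_D (fun y => ((hF 1).2.1 y).1)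
    (fun y => ((hF 1).2.2 y).2) (h := G.gaugeLoop f₀ P.g P'.g)
    (by rw [F.map1X_gaugeLoop, ← H.eq_transportG_iff]; exact hg')
  have hg : P'.g = G.transportG f₀ P.g c₁ := (G.eq_transportG_iff _ _ _).2 hc₁
  refine ⟨f₀, c₁, (G.isGauge_iff _ _ _ _ _ _).2
    ⟨hg, F.eq_of_D_eq_of_map2X_eq (fun y => ((hF 2).2.2 y).1) ?_ ?_⟩⟩
  · rw [G.D_transportA _ _ _ _ P.isDescent.1.symm, ← hg]
    exact P'.isDescent.1.symm
  · refine ha'.trans (Eq.trans ?_ (F.mapA_transportA _ _ _ _).symm)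
    exact congrArg (H.transportA (F.mapF f₀) (F.mapG P.g) (F.mapA P.a)) hFc₁.symm
end

section
/- Failure-of-1-cocycle compatibility under partial gauge transformation: let (x,g,a) be a descent datum in a cosimplicial crossed groupoid G and (f,c) a partial gauge transformation to a partial datum (x',g'), so g' = f_{(1)} ∘ g ∘ D(c) ∘ f_{(0)}⁻¹. Define a' := Ad(f_{(0)})(c_{(0,2)}⁻¹ ∘ a ∘ Ad(g_{(0,1)}⁻¹)(c_{(1,2)}) ∘ c_{(0,1)}). Then (g'_{(0,2)})⁻¹ ∘ g'_{(1,2)} ∘ g'_{(0,1)} = D(a') in the group G²₁(x'_{(0)}). -/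
/-! Each gauge-transformed edge g'_{(i,j)} = f_{(j)} ∘ g_{(i,j)} ∘ D(c_{(i,j)}) ∘ f_{(i)}⁻¹ is
conjugated by vertex terms, which cancel telescopically in g'_{(0,2)}⁻¹ ∘ g'_{(1,2)} ∘ g'_{(0,1)}.
What remains is f_{(0)} ∘ D(c_{(0,2)})⁻¹ ∘ (g_{(0,2)}⁻¹ g_{(1,2)} g_{(0,1)}) ∘
(g_{(0,1)}⁻¹ D(c_{(1,2)}) g_{(0,1)}) ∘ D(c_{(0,1)}) ∘ f_{(0)}⁻¹; the bracket in the middle is D(a),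
and equivariance of D assembles everything into D(a'). -/

namespace CrossedGroupoid

variable (G : CrossedGroupoid)

theorem inv_eq_of_comp_eq_id {x y} {f : G.Hom x y} {g : G.Hom y x}
    (h : G.comp g f = G.id x) : g = G.inv f := by
  calc g = G.comp g (G.comp f (G.inv f)) := by rw [G.comp_inv, G.comp_id]
    _ = G.comp (G.comp g f) (G.inv f) := (G.comp_assoc _ _ _).symm
    _ = G.inv f := by rw [h, G.id_comp]

theorem inv_comp_rev_s16 {x y z} (g : G.Hom y z) (f : G.Hom x y) :
    G.inv (G.comp g f) = G.comp (G.inv f) (G.inv g) := by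
  symm; apply G.inv_eq_of_comp_eq_id
  rw [G.comp_assoc, ← G.comp_assoc (G.inv g), G.inv_comp, G.id_comp, G.inv_comp]

theorem inv_inv_s16 {x y} (f : G.Hom x y) : G.inv (G.inv f) = f :=
  (G.inv_eq_of_comp_eq_id (G.comp_inv f)).symm

theorem inv_comp_cancel_left_s16 {x y z} (f : G.Hom y z) (g : G.Hom x y) :
    G.comp (G.inv f) (G.comp f g) = g := by
  rw [← G.comp_assoc, G.inv_comp, G.id_comp]

theorem comp_inv_cancel_left_s16 {x y z} (f : G.Hom z y) (g : G.Hom x y) :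
    G.comp f (G.comp (G.inv f) g) = g := by
  rw [← G.comp_assoc, G.comp_inv, G.id_comp]

theorem D_inv2_s16 {x} (a : G.G2 x) : G.D (G.inv2 a) = G.inv (G.D a) := by
  apply G.inv_eq_of_comp_eq_id
  rw [← G.D_mul, G.inv2_mul, G.D_one]

def gaugeHom {x₀ x₁ y₀ y₁ : G.Obj} (f₀ : G.Hom x₀ y₀) (f₁ : G.Hom x₁ y₁) (c : G.G2 x₀)
    (g : G.Hom x₀ x₁) : G.Hom y₀ y₁ :=
  G.comp (G.comp (G.comp f₁ g) (G.D c)) (G.inv f₀)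

theorem hcast_gaugeHom {x₀ x₁ y₀ y₁ x₀' x₁' y₀' y₁' : G.Obj} (ex₀ : x₀ = x₀') (ex₁ : x₁ = x₁')
    (ey₀ : y₀ = y₀') (ey₁ : y₁ = y₁') (f₀ : G.Hom x₀ y₀) (f₁ : G.Hom x₁ y₁) (c : G.G2 x₀)
    (g : G.Hom x₀ x₁) :
    G.hcast ey₀ ey₁ (G.gaugeHom f₀ f₁ c g)
      = G.gaugeHom (G.hcast ex₀ ey₀ f₀) (G.hcast ex₁ ey₁ f₁) (G.cast2 ex₀ c)
          (G.hcast ex₀ ex₁ g) := by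
  subst ex₀ ex₁ ey₀ ey₁; rfl

theorem gaugeHom_triangle {x₀ x₁ x₂ y₀ y₁ y₂ : G.Obj}
    (f₀ : G.Hom x₀ y₀) (f₁ : G.Hom x₁ y₁) (f₂ : G.Hom x₂ y₂)
    (g₀₁ : G.Hom x₀ x₁) (g₁₂ : G.Hom x₁ x₂) (g₀₂ : G.Hom x₀ x₂)
    (c₀₁ c₀₂ : G.G2 x₀) (c₁₂ : G.G2 x₁) (a : G.G2 x₀)
    (h : G.comp (G.comp (G.inv g₀₂) g₁₂) g₀₁ = G.D a) :
    G.comp (G.comp (G.inv (G.gaugeHom f₀ f₂ c₀₂ g₀₂)) (G.gaugeHom f₁ f₂ c₁₂ g₁₂))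
        (G.gaugeHom f₀ f₁ c₀₁ g₀₁)
      = G.D (G.Ad f₀ (G.mul (G.mul (G.mul (G.inv2 c₀₂) a) (G.Ad (G.inv g₀₁) c₁₂)) c₀₁)) := by
  rw [G.D_Ad, G.D_mul, G.D_mul, G.D_mul, G.D_inv2_s16, G.D_Ad, G.inv_inv_s16, ← h]
  simp only [gaugeHom, comp_assoc, inv_comp_rev_s16, inv_inv_s16, inv_comp_cancel_left_s16,
    comp_inv_cancel_left_s16]

end CrossedGroupoid

theorem CrossedGroupoidHom.map1_inv_s16 {G H : CrossedGroupoid} (F : CrossedGroupoidHom G H)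
    {x y : G.Obj} (f : G.Hom x y) : F.map1 (G.inv f) = H.inv (F.map1 f) := by
  apply H.inv_eq_of_comp_eq_id
  rw [← F.map1_comp, G.inv_comp, F.map1_id]

theorem CrossedGroupoidHom.map1_gaugeHom {G H : CrossedGroupoid} (F : CrossedGroupoidHom G H)
    {x₀ x₁ y₀ y₁ : G.Obj} (f₀ : G.Hom x₀ y₀) (f₁ : G.Hom x₁ y₁) (c : G.G2 x₀)
    (g : G.Hom x₀ x₁) :
    F.map1 (G.gaugeHom f₀ f₁ c g) = H.gaugeHom (F.map1 f₀) (F.map1 f₁) (F.map2 c) (F.map1 g) := by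
  rw [CrossedGroupoid.gaugeHom, F.map1_comp, F.map1_comp, F.map1_comp, F.map1_inv_s16, F.map_D]
  rfl

theorem CrossedGroupoidHom.map1_eq_hcast {G H : CrossedGroupoid}
    {F F' : CrossedGroupoidHom G H} (h : F = F') {x y : G.Obj} (f : G.Hom x y)
    (ex : F.obj x = F'.obj x) (ey : F.obj y = F'.obj y) :
    F'.map1 f = H.hcast ex ey (F.map1 f) := by
  subst h; rfl

namespace CosimplicialCrossedGroupoid

variable (G : CosimplicialCrossedGroupoid)

/-- The paper's f_{(i)}, typed between the vertex objects `G.X _ q i`. -/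
def vtxHom {x x' : (G.obj 0).Obj} (f : (G.obj 0).Hom x x') (q : ℕ) (i : Fin (q + 1)) :
    (G.obj q).Hom (G.X x q i) (G.X x' q i) :=
  (G.map (vtxMap i)).map1 f

theorem vtxHom_apply {x x' : (G.obj 0).Obj} (f : (G.obj 0).Hom x x') {p q : ℕ}
    (α : Fin (p + 1) →o Fin (q + 1)) (i : Fin (p + 1)) :
    G.vtxHom f q (α i) = (G.obj q).hcast (G.X_push x α i) (G.X_push x' α i)
      ((G.map α).map1 (G.vtxHom f p i)) :=
  CrossedGroupoidHom.map1_eq_hcast (G.map_comp α (vtxMap i)).symm f _ _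

theorem push1_gaugeHom {x x' : (G.obj 0).Obj} (f : (G.obj 0).Hom x x')
    (g : (G.obj 1).Hom (G.X x 1 0) (G.X x 1 1)) (c : (G.obj 1).G2 (G.X x 1 0)) {q : ℕ}
    (α : Fin 2 →o Fin (q + 1)) :
    G.push1 α ((G.obj 1).gaugeHom (G.vtxHom f 1 0) (G.vtxHom f 1 1) c g)
      = (G.obj q).gaugeHom (G.vtxHom f q (α 0)) (G.vtxHom f q (α 1)) (G.push2 α c)
          (G.push1 α g) := by
  rw [push1, push2, CrossedGroupoidHom.map1_gaugeHom,
    (G.obj q).hcast_gaugeHom (G.X_push x α 0) (G.X_push x α 1), vtxHom_apply, vtxHom_apply]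
  rfl

end CosimplicialCrossedGroupoid

/-- the failure-of-1-cocycle condition holds for the transported
datum (x', g', a') with a' := transportA f g a c. -/
theorem transport_cocycle1 (G : CosimplicialCrossedGroupoid) (P : G.Desc)
    (x' : (G.obj 0).Obj) (g' : (G.obj 1).Hom (G.X x' 1 0) (G.X x' 1 1))
    (f : (G.obj 0).Hom P.x x') (c : (G.obj 1).G2 (G.X P.x 1 0))
    (hpartial : g' = (G.obj 1).comp ((G.obj 1).comp ((G.obj 1).comp
      ((G.map (vtxMap (1 : Fin 2))).map1 f) P.g) ((G.obj 1).D c))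
      ((G.obj 1).inv ((G.map (vtxMap (0 : Fin 2))).map1 f))) :
    (G.obj 2).comp ((G.obj 2).comp
        ((G.obj 2).inv (G.push1 (edgeMap 0 2 (by decide)) g'))
        (G.push1 (edgeMap 1 2 (by decide)) g'))
      (G.push1 (edgeMap 0 1 (by decide)) g')
      = (G.obj 2).D (G.transportA f P.g P.a c) := by
  have hg' : g' = (G.obj 1).gaugeHom (G.vtxHom f 1 0) (G.vtxHom f 1 1) c P.g := hpartial
  rw [hg', G.push1_gaugeHom, G.push1_gaugeHom, G.push1_gaugeHom]
  exact (G.obj 2).gaugeHom_triangle _ _ _ _ _ _ _ _ _ _ P.isDescent.1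
end
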